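/- Let G be the time-invariant dynamic Bayesian network DAG of the environment. In G, the previous-slice latent component g_{j,t-1} is neither a descendant of g_{i,t} nor equal to it, and if c^{g→g}_{i,j} = 0 then every path in G between g_{j,t-1} and g_{i,t} is blocked by the conditioning set consisting of the remaining previous-slice latent components g_{\{1,…,d\}∖\{j\}, t-1} and the action a_{t-1}; that is, this set d-separates g_{j,t-1} from g_{i,t} whenever the edge g_{j,t-1} → g_{i,t} is absent. -/

import Mathlib

open Relation

/-- Nodes of the time-invariant dynamic Bayesian network: latent state
components `g_{i,t}`, actions `a_t`, and rewards `r_t`. -/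
inductive DBNNode (d : ℕ) : Type where
  | latent (i : Fin d) (t : ℕ)
  | action (t : ℕ)
  | reward (t : ℕ)
deriving DecidableEq

/-- The fixed binary structural masks of the DBN.  `cgg i j = true` encodes the
edge `g_{j,t-1} → g_{i,t}`, `cag i` the edge `a_{t-1} → g_{i,t}`, `cgr i` the
edge `g_{i,t-1} → r_t`, and `car` the edge `a_{t-1} → r_t`. -/
structure DBNMasks (d : ℕ) where
  cgg : Fin d → Fin d → Bool
  cag : Fin d → Bool
  cgr : Fin d → Bool
  car : Bool

/-- The directed edges of the time-invariant DBN graph `G`. -/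
def DBNEdge {d : ℕ} (c : DBNMasks d) : DBNNode d → DBNNode d → Prop
  | .latent j t, .latent i t' => t' = t + 1 ∧ c.cgg i j = true
  | .action t, .latent i t' => t' = t + 1 ∧ c.cag i = true
  | .latent i t, .reward t' => t' = t + 1 ∧ c.cgr i = true
  | .action t, .reward t' => t' = t + 1 ∧ c.car = true
  | _, _ => False

/-- Undirected adjacency induced by a directed edge relation. -/
def Adj {V : Type*} (E : V → V → Prop) (x y : V) : Prop := E x y ∨ E y x

/-- `p` is a (simple, undirected) path in the graph with edge relation `E`:
consecutive nodes are adjacent and no node repeats. -/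
def IsPathList {V : Type*} (E : V → V → Prop) (p : List V) : Prop :=
  p.Chain' (Adj E) ∧ p.Nodup

/-- A path `p` is blocked by the conditioning set `Z`: it contains a
chain `u → m → v` (in either direction) or a fork `u ← m → v` with middle
node `m ∈ Z`, or a collider `u → m ← v` with `m ∉ Z` and no descendant of
`m` in `Z`. -/
def BlockedBy {V : Type*} (E : V → V → Prop) (Z : Set V) (p : List V) : Prop :=
  ∃ u m v : V, [u, m, v] <:+: p ∧
    ((((E u m ∧ E m v) ∨ (E v m ∧ E m u) ∨ (E m u ∧ E m v)) ∧ m ∈ Z) ∨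
      ((E u m ∧ E v m) ∧ m ∉ Z ∧ ∀ w : V, Relation.TransGen E m w → w ∉ Z))

/-- `Z` d-separates `X` from `Y` in the graph with edge relation `E`: every
path between a node of `X` and a node of `Y` is blocked by `Z`. -/
def DSep {V : Type*} (E : V → V → Prop) (X Y Z : Set V) : Prop :=
  ∀ x ∈ X, ∀ y ∈ Y, ∀ p : List V,
    IsPathList E p → p.head? = some x → p.getLast? = some y → BlockedBy E Z p

/-- The joint distribution (represented abstractly by its ternary conditional
independence relation `CI X Y Z`, "X ⫫ Y given Z") satisfies the global Markov
condition w.r.t. the graph: d-separation implies conditional independence. -/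
def GlobalMarkov {V : Type*} (E : V → V → Prop)
    (CI : Set V → Set V → Set V → Prop) : Prop :=
  ∀ X Y Z : Set V, Disjoint X Y → Disjoint X Z → Disjoint Y Z →
    DSep E X Y Z → CI X Y Z

/-- The joint distribution is faithful to the graph: every conditional
independence corresponds to a d-separation. -/
def FaithfulTo {V : Type*} (E : V → V → Prop)
    (CI : Set V → Set V → Set V → Prop) : Prop :=
  ∀ X Y Z : Set V, Disjoint X Y → Disjoint X Z → Disjoint Y Z →
    CI X Y Z → DSep E X Y Z

/-- `g_{i,t} ∈ g_t^min` iff `c_i^{g→r} = 1` or `g_{i,t}` has a directed path in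
`G` to a future reward `r_{t+k}` (some `k > 0`) passing through other latent
state components. -/
def InMinSet {d : ℕ} (c : DBNMasks d) (i : Fin d) (t : ℕ) : Prop :=
  c.cgr i = true ∨
    ∃ k : ℕ, 0 < k ∧ ∃ (j : Fin d) (s : ℕ),
      Relation.TransGen (DBNEdge c) (DBNNode.latent i t) (DBNNode.latent j s) ∧
      Relation.TransGen (DBNEdge c) (DBNNode.latent j s) (DBNNode.reward (t + k))

/-- The minimal latent state set `g_t^min`, as a set of nodes of `G`. -/
def MinSet {d : ℕ} (c : DBNMasks d) (t : ℕ) : Set (DBNNode d) :=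
  {n | ∃ i : Fin d, n = DBNNode.latent i t ∧ InMinSet c i t}

/-! Every edge of the network goes from one time slice to the next, so the slice index grades
the graph. Take a path from `g_{j,t}` to `g_{i,t+1}`. If its first step goes forward into slice
`t + 1`, the path cannot keep going forward (it ends in slice `t + 1`, and the edge
`g_{j,t} → g_{i,t+1}` is absent), so it turns back at a collider, which together with all its
descendants lies after slice `t`, whereas the conditioning set lies in slice `t`. If its first
step goes back into slice `t - 1`, the path must later leave slice `t` forward. The node where it
does so lies in slice `t`, differs from `g_{j,t}` (the path is simple) and is a non-collider with
an outgoing edge, so it is an action or another latent component: a node of the conditioning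
set. -/

theorem List.mem_of_triple_infix_cons {α : Type*} {a m b x : α} {l : List α}
    (h : [a, m, b] <:+: x :: l) : m ∈ l := by
  rcases List.infix_cons_iff.mp h with ⟨r, hr⟩ | hinf
  · simp only [List.cons_append, List.nil_append, List.cons.injEq] at hr
    simp [← hr.2]
  · exact hinf.subset (by simp)

theorem blockedBy_of_noncollider {V : Type*} {E : V → V → Prop} {Z : Set V} {p : List V}
    {a m b : V} (hinf : [a, m, b] <:+: p) (ham : Adj E a m) (hmb : E m b) (hm : m ∈ Z) :
    BlockedBy E Z p := by
  refine ⟨a, m, b, hinf, Or.inl ⟨?_, hm⟩⟩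
  rcases ham with ham | hma
  · exact Or.inl ⟨ham, hmb⟩
  · exact Or.inr (Or.inr ⟨hma, hmb⟩)

section Graded

variable {V : Type*} {E : V → V → Prop} (τ : V → ℕ)

theorem lt_of_transGen_of_grading (hτ : ∀ ⦃x y⦄, E x y → τ y = τ x + 1) {x y : V}
    (h : TransGen E x y) : τ x < τ y := by
  induction h with
  | single h => rw [hτ h]; omega
  | tail _ h ih => rw [hτ h]; omega

theorem exists_collider_of_getLast_le (hτ : ∀ ⦃x y⦄, E x y → τ y = τ x + 1)
    {u v w y : V} {l : List V} (hchain : (u :: v :: w :: l).IsChain (Adj E)) (huv : E u v)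
    (hlast : (u :: v :: w :: l).getLast? = some y) (hy : τ y ≤ τ v) :
    ∃ a m b, [a, m, b] <:+: u :: v :: w :: l ∧ E a m ∧ E b m ∧ TransGen E u m := by
  have hchain' := (List.isChain_cons_cons.mp hchain).2
  rcases (List.isChain_cons_cons.mp hchain').1 with hvw | hwv
  · cases l with
    | nil =>
      simp only [List.getLast?_cons_cons, List.getLast?_singleton, Option.some.injEq] at hlast
      rw [← hlast, hτ hvw] at hy
      omega
    | cons x l =>
      obtain ⟨a, m, b, hinf, ham, hbm, hvm⟩ :=
        exists_collider_of_getLast_le hτ hchain' hvw (by simpa using hlast) (by rw [hτ hvw]; omega)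
      exact ⟨a, m, b, hinf.trans (List.infix_cons (List.infix_refl _)), ham, hbm, .head huv hvm⟩
  · exact ⟨u, v, w, List.prefix_append _ _ |>.isInfix, huv, hwv, .single huv⟩

theorem exists_forward_at_of_lt_getLast (hτ : ∀ ⦃x y⦄, E x y → τ y = τ x + 1) {t : ℕ}
    {a m y : V} {l : List V} (hchain : (a :: m :: l).IsChain (Adj E)) (hm : τ m ≤ t)
    (hlast : (a :: m :: l).getLast? = some y) (hy : t < τ y) :
    ∃ a' m' b', [a', m', b'] <:+: a :: m :: l ∧ Adj E a' m' ∧ E m' b' ∧ τ m' = t := by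
  have hchain' := (List.isChain_cons_cons.mp hchain).2
  cases l with
  | nil =>
    simp only [List.getLast?_cons_cons, List.getLast?_singleton, Option.some.injEq] at hlast
    subst hlast
    omega
  | cons b l =>
    by_cases hstep : E m b ∧ τ m = t
    · exact ⟨a, m, b, List.prefix_append _ _ |>.isInfix, (List.isChain_cons_cons.mp hchain).1,
        hstep.1, hstep.2⟩
    · have hb : τ b ≤ t := by
        rcases (List.isChain_cons_cons.mp hchain').1 with hmb | hbm
        · have := hτ hmb
          have : τ m ≠ t := fun hmt => hstep ⟨hmb, hmt⟩
          omega
        · have := hτ hbm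
          omega
      obtain ⟨a', m', b', hinf, ham, hmb, hmt⟩ :=
        exists_forward_at_of_lt_getLast hτ hchain' hb (by simpa using hlast) hy
      exact ⟨a', m', b', hinf.trans (List.infix_cons (List.infix_refl _)), ham, hmb, hmt⟩

end Graded

namespace DBNNode

variable {d : ℕ} {c : DBNMasks d}

def time : DBNNode d → ℕ
  | latent _ t => t
  | action t => t
  | reward t => t

theorem time_succ_of_edge {x y : DBNNode d} (h : DBNEdge c x y) : y.time = x.time + 1 := by
  cases x <;> cases y <;> simp_all [DBNEdge, time]

theorem time_lt_of_transGen {x y : DBNNode d} (h : TransGen (DBNEdge c) x y) :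
    x.time < y.time :=
  lt_of_transGen_of_grading time (fun _ _ => time_succ_of_edge) h

end DBNNode

theorem dsep_latent_of_cgg_eq_false {d : ℕ} {c : DBNMasks d} {i j : Fin d} {t : ℕ}
    (hc : c.cgg i j = false) :
    DSep (DBNEdge c) {DBNNode.latent j t} {DBNNode.latent i (t + 1)}
      ({n : DBNNode d | ∃ j' : Fin d, j' ≠ j ∧ n = DBNNode.latent j' t} ∪
        {DBNNode.action t}) := by
  set Z : Set (DBNNode d) :=
    {n | ∃ j' : Fin d, j' ≠ j ∧ n = DBNNode.latent j' t} ∪ {DBNNode.action t}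
  have hZ : ∀ z ∈ Z, z.time = t := by
    rintro z (⟨j', -, rfl⟩ | rfl) <;> rfl
  have hτ : ∀ ⦃x y⦄, DBNEdge c x y → y.time = x.time + 1 := fun _ _ => DBNNode.time_succ_of_edge
  rintro x rfl y rfl p ⟨hchain, hnodup⟩ hhead hlast
  rcases p with _ | ⟨x, _ | ⟨g, rest⟩⟩
  · simp at hhead
  · simp only [List.head?_cons, List.getLast?_singleton, Option.some.injEq] at hhead hlast
    simp [hhead] at hlast
  simp only [List.head?_cons, Option.some.injEq] at hhead
  subst hhead
  rcases (List.isChain_cons_cons.mp hchain).1 with hfwd | hback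
  · cases rest with
    | nil =>
      simp only [List.getLast?_cons_cons, List.getLast?_singleton, Option.some.injEq] at hlast
      subst hlast
      simp [DBNEdge, hc] at hfwd
    | cons w rest =>
      obtain ⟨a, m, b, hinf, ham, hbm, hjm⟩ :=
        exists_collider_of_getLast_le DBNNode.time hτ hchain hfwd hlast (by rw [hτ hfwd]; rfl)
      have hm : t < m.time := DBNNode.time_lt_of_transGen hjm
      refine ⟨a, m, b, hinf, Or.inr ⟨⟨ham, hbm⟩, fun hmZ => ?_, fun w hmw hwZ => ?_⟩⟩
      · exact absurd (hZ m hmZ) hm.ne'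
      · exact absurd (hZ w hwZ) (hm.trans (DBNNode.time_lt_of_transGen hmw)).ne'
  · obtain ⟨a, m, b, hinf, ham, hmb, hmt⟩ := exists_forward_at_of_lt_getLast DBNNode.time hτ
      (t := t) hchain (by have : t = g.time + 1 := hτ hback; omega) hlast
      t.lt_succ_self
    have hmj : m ≠ DBNNode.latent j t :=
      fun h => (List.nodup_cons.mp hnodup).1 (h ▸ List.mem_of_triple_infix_cons hinf)
    refine blockedBy_of_noncollider hinf ham hmb ?_
    rcases m with ⟨k, s⟩ | s | s
    · exact Or.inl ⟨k, fun hkj => hmj (by rw [hkj, ← hmt]; rfl), by rw [← hmt]; rfl⟩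
    · exact Or.inr (by rw [← hmt]; rfl)
    · cases b <;> simp [DBNEdge] at hmb

/-- In the DBN graph `G`, the previous-slice latent component `g_{j,t-1}` is
neither a descendant of `g_{i,t}` nor equal to it; and if `c^{g→g}_{i,j} = 0`,
then the set consisting of the remaining previous-slice latent components and
the action `a_{t-1}` d-separates `g_{j,t-1}` from `g_{i,t}`. -/
theorem dsep_of_absent_edge (d : ℕ) (c : DBNMasks d) (i j : Fin d) (t : ℕ) :
    ¬ Relation.TransGen (DBNEdge c) (DBNNode.latent i (t + 1)) (DBNNode.latent j t) ∧
    DBNNode.latent j t ≠ DBNNode.latent i (t + 1) ∧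
    (c.cgg i j = false →
      DSep (DBNEdge c) {DBNNode.latent j t} {DBNNode.latent i (t + 1)}
        ({n : DBNNode d | ∃ j' : Fin d, j' ≠ j ∧ n = DBNNode.latent j' t} ∪
          {DBNNode.action t})) := by
  refine ⟨fun h => ?_, by simp, dsep_latent_of_cgg_eq_false⟩
  have : t + 1 < t := DBNNode.time_lt_of_transGen h
  omega
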